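/- arXiv:2410.06484 — 5 statements merged into one kernel-verified Lean document; each statement's English description precedes it below -/
import Mathlib

section
/- (Double robustness, Proposition 1) Define the population estimating function Ψ(β; h, m) = E_S[h(Z) X (m(Z) − Y)] − E_T[X (m(Z) − g(Xᵀβ))], where E_S, E_T denote expectations under the source and target covariate distributions and the conditional law of Y | Z is shared. If either h(z) = h⋆(z) := p_T(z)/p_S(z) for all z, or m(z) = m⋆(z) := E[Y | Z = z] for all z, then Ψ(β; h, m) = 0 if and only if E_T[X (Y − g(Xᵀβ))] = 0; in particular β̄ solving the target equation solves Ψ(β; h, m) = 0. -/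
/-!
Both the source term `E_S[h X (m − Y)]` and the target term `E_T[X (m − Y)]` are unchanged when
`Y` is replaced by `m⋆(Z)`, by the tower property. If `m = m⋆` they both vanish; if
`h = p_T / p_S` they coincide by the change of measure `p_S h = p_T`. Either way
`Ψ(β; h, m) = −E_T[X (Y − g(Xᵀβ))]`.
-/

open MeasureTheory

section

variable {Ω α : Type*} [MeasurableSpace Ω] [MeasurableSpace α]

theorem integral_mul_sub_eq_sub {μ : Measure Ω} {f a b : Ω → ℝ}
    (ha : Integrable (fun ω => f ω * a ω) μ) (hb : Integrable (fun ω => f ω * b ω) μ) :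
    ∫ ω, f ω * (a ω - b ω) ∂μ = ∫ ω, f ω * a ω ∂μ - ∫ ω, f ω * b ω ∂μ := by
  simp only [mul_sub]
  exact integral_sub ha hb

theorem integral_mul_sub_eq_of_integral_mul_eq {μ : Measure Ω} {f a b c : Ω → ℝ}
    (ha : Integrable (fun ω => f ω * a ω) μ) (hb : Integrable (fun ω => f ω * b ω) μ)
    (hc : Integrable (fun ω => f ω * c ω) μ)
    (hbc : ∫ ω, f ω * b ω ∂μ = ∫ ω, f ω * c ω ∂μ) :
    ∫ ω, f ω * (a ω - b ω) ∂μ = ∫ ω, f ω * (a ω - c ω) ∂μ := by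
  rw [integral_mul_sub_eq_sub ha hb, integral_mul_sub_eq_sub ha hc, hbc]

theorem integral_comp_eq_integral_density_mul {μ : Measure Ω} {ν : Measure α} {Z : Ω → α}
    {p : α → ℝ} (hZ : Measurable Z) (hp_meas : Measurable p) (hp : ∀ z, 0 ≤ p z)
    (hmap : μ.map Z = ν.withDensity (fun z => ENNReal.ofReal (p z)))
    {φ : α → ℝ} (hφ : Measurable φ) :
    ∫ ω, φ (Z ω) ∂μ = ∫ z, p z * φ z ∂ν := by
  rw [← integral_map hZ.aemeasurable hφ.aestronglyMeasurable, hmap,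
    integral_withDensity_eq_integral_toReal_smul hp_meas.ennreal_ofReal
      (ae_of_all _ fun _ => ENNReal.ofReal_lt_top)]
  simp only [ENNReal.toReal_ofReal (hp _), smul_eq_mul]

theorem integral_densityRatio_mul_comp {μS μT : Measure Ω} {ν : Measure α} {Z : Ω → α}
    {pS pT r : α → ℝ} (hZ : Measurable Z) (hpS_meas : Measurable pS) (hpT_meas : Measurable pT)
    (hpS : ∀ z, 0 ≤ pS z) (hpT : ∀ z, 0 ≤ pT z)
    (hmapS : μS.map Z = ν.withDensity (fun z => ENNReal.ofReal (pS z)))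
    (hmapT : μT.map Z = ν.withDensity (fun z => ENNReal.ofReal (pT z)))
    (hr_meas : Measurable r) (hr : ∀ z, pS z * r z = pT z) {φ : α → ℝ} (hφ : Measurable φ) :
    ∫ ω, r (Z ω) * φ (Z ω) ∂μS = ∫ ω, φ (Z ω) ∂μT := by
  rw [integral_comp_eq_integral_density_mul (φ := fun z => r z * φ z) hZ hpS_meas hpS hmapS
      (hr_meas.mul hφ), integral_comp_eq_integral_density_mul hZ hpT_meas hpT hmapT hφ]
  simp only [← mul_assoc, hr]

theorem integral_source_residual_eq_integral_target_residual {μS μT : Measure Ω} {ν : Measure α}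
    {Z : Ω → α} {Y : Ω → ℝ} {pS pT h m mstar φ : α → ℝ} (hZ : Measurable Z)
    (hpS_meas : Measurable pS) (hpT_meas : Measurable pT) (hpS : ∀ z, 0 ≤ pS z)
    (hpT : ∀ z, 0 ≤ pT z)
    (hmapS : μS.map Z = ν.withDensity (fun z => ENNReal.ofReal (pS z)))
    (hmapT : μT.map Z = ν.withDensity (fun z => ENNReal.ofReal (pT z)))
    (hh_meas : Measurable h) (hm_meas : Measurable m) (hmstar_meas : Measurable mstar)
    (hφ : Measurable φ)
    (hSm : Integrable (fun ω => h (Z ω) * φ (Z ω) * m (Z ω)) μS)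
    (hSY : Integrable (fun ω => h (Z ω) * φ (Z ω) * Y ω) μS)
    (hSmstar : Integrable (fun ω => h (Z ω) * φ (Z ω) * mstar (Z ω)) μS)
    (hTm : Integrable (fun ω => φ (Z ω) * m (Z ω)) μT)
    (hTY : Integrable (fun ω => φ (Z ω) * Y ω) μT)
    (hTmstar : Integrable (fun ω => φ (Z ω) * mstar (Z ω)) μT)
    (htowerS : ∫ ω, h (Z ω) * φ (Z ω) * Y ω ∂μS = ∫ ω, h (Z ω) * φ (Z ω) * mstar (Z ω) ∂μS)
    (htowerT : ∫ ω, φ (Z ω) * Y ω ∂μT = ∫ ω, φ (Z ω) * mstar (Z ω) ∂μT)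
    (hcase : (∀ z, pS z * h z = pT z) ∨ ∀ z, m z = mstar z) :
    ∫ ω, h (Z ω) * φ (Z ω) * (m (Z ω) - Y ω) ∂μS = ∫ ω, φ (Z ω) * (m (Z ω) - Y ω) ∂μT := by
  rw [integral_mul_sub_eq_of_integral_mul_eq hSm hSY hSmstar htowerS,
    integral_mul_sub_eq_of_integral_mul_eq hTm hTY hTmstar htowerT]
  rcases hcase with hratio | hm
  · simp only [mul_assoc]
    exact integral_densityRatio_mul_comp hZ hpS_meas hpT_meas hpS hpT hmapS hmapT hh_meas hratio
      (hφ.mul (hm_meas.sub hmstar_meas))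
  · simp [hm]

end

theorem doubly_robust_estimating_equation_general {Ω α : Type*} [MeasurableSpace Ω] [MeasurableSpace α]
    (μS μT : Measure Ω)
    (ν : Measure α) (Z : Ω → α) (Y : Ω → ℝ) (q : ℕ) (x : α → Fin q → ℝ)
    (pS pT : α → ℝ) (g : ℝ → ℝ) (mstar h m : α → ℝ) (β : Fin q → ℝ)
    (hZ : Measurable Z)
    (hx : ∀ i, Measurable fun z => x z i)
    (hhme : Measurable h) (hmme : Measurable m) (hmsme : Measurable mstar)
    (hpSme : Measurable pS) (hpTme : Measurable pT)
    (hpS : ∀ z, 0 ≤ pS z) (hpT : ∀ z, 0 ≤ pT z)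
    (hpos : ∀ z, 0 < pT z → 0 < pS z)
    -- `pS`, `pT` are the densities of `Z` under the source and target populations:
    (hmapS : Measure.map Z μS = ν.withDensity (fun z => ENNReal.ofReal (pS z)))
    (hmapT : Measure.map Z μT = ν.withDensity (fun z => ENNReal.ofReal (pT z)))
    -- `m⋆(z) = E[Y | Z = z]`, shared across populations (tower property under both):
    (htowerS : ∀ ψ : α → ℝ, Integrable (fun ω => ψ (Z ω) * Y ω) μS →
      Integrable (fun ω => ψ (Z ω) * mstar (Z ω)) μS →
      ∫ ω, ψ (Z ω) * Y ω ∂μS = ∫ ω, ψ (Z ω) * mstar (Z ω) ∂μS)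
    (htowerT : ∀ ψ : α → ℝ, Integrable (fun ω => ψ (Z ω) * Y ω) μT →
      Integrable (fun ω => ψ (Z ω) * mstar (Z ω)) μT →
      ∫ ω, ψ (Z ω) * Y ω ∂μT = ∫ ω, ψ (Z ω) * mstar (Z ω) ∂μT)
    -- integrability of all relevant terms:
    (hint2 : ∀ i, Integrable (fun ω => h (Z ω) * x (Z ω) i * Y ω) μS)
    (hint3 : ∀ i, Integrable (fun ω => h (Z ω) * x (Z ω) i * m (Z ω)) μS)
    (hint4 : ∀ i, Integrable (fun ω => h (Z ω) * x (Z ω) i * mstar (Z ω)) μS)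
    (hint5 : ∀ i, Integrable (fun ω => x (Z ω) i * Y ω) μT)
    (hint6 : ∀ i, Integrable (fun ω => x (Z ω) i * m (Z ω)) μT)
    (hint7 : ∀ i, Integrable (fun ω => x (Z ω) i * mstar (Z ω)) μT)
    (hint8 : ∀ i, Integrable (fun ω => x (Z ω) i * g (∑ j, x (Z ω) j * β j)) μT)
    -- at least one nuisance model is correctly specified:
    (hcase : (∀ z, h z = pT z / pS z) ∨ (∀ z, m z = mstar z)) :
    (∀ i, ∫ ω, h (Z ω) * x (Z ω) i * (m (Z ω) - Y ω) ∂μS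
        - ∫ ω, x (Z ω) i * (m (Z ω) - g (∑ j, x (Z ω) j * β j)) ∂μT = 0)
      ↔ (∀ i, ∫ ω, x (Z ω) i * (Y ω - g (∑ j, x (Z ω) j * β j)) ∂μT = 0) := by
  have hbias : ∀ i, ∫ ω, h (Z ω) * x (Z ω) i * (m (Z ω) - Y ω) ∂μS
      = ∫ ω, x (Z ω) i * (m (Z ω) - Y ω) ∂μT := fun i =>
    integral_source_residual_eq_integral_target_residual hZ hpSme hpTme hpS hpT hmapS hmapT
      hhme hmme hmsme (hx i) (hint3 i) (hint2 i) (hint4 i) (hint6 i) (hint5 i) (hint7 i)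
      (htowerS (fun z => h z * x z i) (hint2 i) (hint4 i))
      (htowerT (fun z => x z i) (hint5 i) (hint7 i)) (hcase.imp_left fun hratio z => by
        rw [hratio z]
        exact mul_div_cancel_of_imp' fun hpS0 =>
          le_antisymm (not_lt.1 fun hpT0 => (hpos z hpT0).ne' hpS0) (hpT z))
  refine forall_congr' fun i => ?_
  rw [hbias i, integral_mul_sub_eq_sub (hint6 i) (hint5 i),
    integral_mul_sub_eq_sub (hint6 i) (hint8 i), integral_mul_sub_eq_sub (hint5 i) (hint8 i)]
  constructor <;> intro _ <;> linarith

/-- Proposition 1, double robustness: if either the density-ratio model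
`h = pT/pS` or the imputation model `m = m⋆` is correctly specified, then the doubly
robust estimating function `Ψ(β; h, m)` vanishes iff the target estimating equation
`E_T[X (Y − g(Xᵀβ))] = 0` holds. -/
theorem doubly_robust_estimating_equation {Ω α : Type*} [MeasurableSpace Ω] [MeasurableSpace α]
    (μS μT : Measure Ω) [IsProbabilityMeasure μS] [IsProbabilityMeasure μT]
    (ν : Measure α) (Z : Ω → α) (Y : Ω → ℝ) (q : ℕ) (x : α → Fin q → ℝ)
    (pS pT : α → ℝ) (g : ℝ → ℝ) (mstar h m : α → ℝ) (β : Fin q → ℝ)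
    (hZ : Measurable Z) (hY : Measurable Y) (hg : Measurable g)
    (hx : ∀ i, Measurable fun z => x z i)
    (hhme : Measurable h) (hmme : Measurable m) (hmsme : Measurable mstar)
    (hpSme : Measurable pS) (hpTme : Measurable pT)
    (hpS : ∀ z, 0 ≤ pS z) (hpT : ∀ z, 0 ≤ pT z)
    (hpos : ∀ z, 0 < pT z → 0 < pS z)
    -- `pS`, `pT` are the densities of `Z` under the source and target populations:
    (hmapS : Measure.map Z μS = ν.withDensity (fun z => ENNReal.ofReal (pS z)))
    (hmapT : Measure.map Z μT = ν.withDensity (fun z => ENNReal.ofReal (pT z)))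
    -- `m⋆(z) = E[Y | Z = z]`, shared across populations (tower property under both):
    (htowerS : ∀ ψ : α → ℝ, Integrable (fun ω => ψ (Z ω) * Y ω) μS →
      Integrable (fun ω => ψ (Z ω) * mstar (Z ω)) μS →
      ∫ ω, ψ (Z ω) * Y ω ∂μS = ∫ ω, ψ (Z ω) * mstar (Z ω) ∂μS)
    (htowerT : ∀ ψ : α → ℝ, Integrable (fun ω => ψ (Z ω) * Y ω) μT →
      Integrable (fun ω => ψ (Z ω) * mstar (Z ω)) μT →
      ∫ ω, ψ (Z ω) * Y ω ∂μT = ∫ ω, ψ (Z ω) * mstar (Z ω) ∂μT)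
    -- integrability of all relevant terms:
    (hint1 : ∀ i, Integrable (fun ω => h (Z ω) * x (Z ω) i * (m (Z ω) - Y ω)) μS)
    (hint2 : ∀ i, Integrable (fun ω => h (Z ω) * x (Z ω) i * Y ω) μS)
    (hint3 : ∀ i, Integrable (fun ω => h (Z ω) * x (Z ω) i * m (Z ω)) μS)
    (hint4 : ∀ i, Integrable (fun ω => h (Z ω) * x (Z ω) i * mstar (Z ω)) μS)
    (hint5 : ∀ i, Integrable (fun ω => x (Z ω) i * Y ω) μT)
    (hint6 : ∀ i, Integrable (fun ω => x (Z ω) i * m (Z ω)) μT)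
    (hint7 : ∀ i, Integrable (fun ω => x (Z ω) i * mstar (Z ω)) μT)
    (hint8 : ∀ i, Integrable (fun ω => x (Z ω) i * g (∑ j, x (Z ω) j * β j)) μT)
    -- at least one nuisance model is correctly specified:
    (hcase : (∀ z, h z = pT z / pS z) ∨ (∀ z, m z = mstar z)) :
    (∀ i, ∫ ω, h (Z ω) * x (Z ω) i * (m (Z ω) - Y ω) ∂μS
        - ∫ ω, x (Z ω) i * (m (Z ω) - g (∑ j, x (Z ω) j * β j)) ∂μT = 0)
      ↔ (∀ i, ∫ ω, x (Z ω) i * (Y ω - g (∑ j, x (Z ω) j * β j)) ∂μT = 0) :=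
  doubly_robust_estimating_equation_general μS μT ν Z Y q x pS pT g mstar h m β hZ hx hhme hmme
    hmsme hpSme hpTme hpS hpT hpos hmapS hmapT htowerS htowerT hint2 hint3 hint4 hint5 hint6 hint7
    hint8 hcase
end

section
/- If both nuisance models are misspecified in a compatible way, the doubly robust estimating function admits the error decomposition Ψ(β̄; h, m) = E_S[(h(Z) − h⋆(Z)) X (m(Z) − m⋆(Z))], i.e., the bias at the true parameter is a product of the two nuisance errors. -/
/-!
Two exact cancellations. The tower property replaces `Y` by `m⋆(Z)` on the source side, and on
the target side the estimating equation for `β̄` replaces `g(Xᵀβ̄)` by `Y` and then the tower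
property replaces `Y` by `m⋆(Z)`. What remains of `Ψ(β̄; h, m)` is
`E_S[h X (m − m⋆)] − E_T[X (m − m⋆)]`, and importance weighting by `h⋆ = p_T / p_S` rewrites the
target expectation as `E_S[h⋆ X (m − m⋆)]`.
-/

open MeasureTheory

theorem max_zero_mul_div_eq {a b : ℝ} (hb : 0 ≤ b) (hab : 0 < b → 0 < a) :
    max a 0 * (b / a) = b := by
  rcases hb.eq_or_lt with rfl | hb
  · simp
  · have ha := hab hb
    rw [max_eq_left ha.le, mul_div_cancel₀ b ha.ne']

theorem integral_sub_eq_integral_sub_of_integral_eq {Ω : Type*} [MeasurableSpace Ω]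
    {μ : Measure Ω} {f u v : Ω → ℝ} (hf : Integrable f μ) (hu : Integrable u μ)
    (hv : Integrable v μ) (huv : ∫ ω, u ω ∂μ = ∫ ω, v ω ∂μ) :
    ∫ ω, (f ω - u ω) ∂μ = ∫ ω, (f ω - v ω) ∂μ := by
  rw [integral_sub hf hu, integral_sub hf hv, huv]

section DensityRatio

variable {Ω α : Type*} [MeasurableSpace Ω] [MeasurableSpace α] {ν : Measure α} {Z : Ω → α}

theorem integral_comp_eq_integral_max_density_mul {μ : Measure Ω} {p : α → ℝ}
    (hZ : Measurable Z) (hp : Measurable p)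
    (hmap : μ.map Z = ν.withDensity fun z => ENNReal.ofReal (p z))
    {f : α → ℝ} (hf : Measurable f) :
    ∫ ω, f (Z ω) ∂μ = ∫ z, max (p z) 0 * f z ∂ν := by
  rw [← integral_map hZ.aemeasurable hf.aestronglyMeasurable, hmap,
    integral_withDensity_eq_integral_toReal_smul hp.ennreal_ofReal
      (ae_of_all _ fun _ => ENNReal.ofReal_lt_top)]
  simp only [ENNReal.toReal_ofReal', smul_eq_mul]

theorem integral_comp_eq_integral_densityRatio_mul {μS μT : Measure Ω} {pS pT : α → ℝ}
    (hZ : Measurable Z) (hpS : Measurable pS) (hpT : Measurable pT)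
    (hpT_nonneg : ∀ z, 0 ≤ pT z) (hpos : ∀ z, 0 < pT z → 0 < pS z)
    (hmapS : μS.map Z = ν.withDensity fun z => ENNReal.ofReal (pS z))
    (hmapT : μT.map Z = ν.withDensity fun z => ENNReal.ofReal (pT z))
    {φ : α → ℝ} (hφ : Measurable φ) :
    ∫ ω, φ (Z ω) ∂μT = ∫ ω, pT (Z ω) / pS (Z ω) * φ (Z ω) ∂μS := by
  rw [integral_comp_eq_integral_max_density_mul hZ hpT hmapT hφ,
    integral_comp_eq_integral_max_density_mul (f := fun z => pT z / pS z * φ z) hZ hpS hmapS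
      ((hpT.div hpS).mul hφ)]
  congr with z
  rw [← mul_assoc, max_zero_mul_div_eq (hpT_nonneg z) (hpos z), max_eq_left (hpT_nonneg z)]

end DensityRatio

theorem doubly_robust_product_bias_general {Ω α : Type*} [MeasurableSpace Ω] [MeasurableSpace α]
    (μS μT : Measure Ω)
    (ν : Measure α) (Z : Ω → α) (Y : Ω → ℝ) (q : ℕ) (x : α → Fin q → ℝ)
    (pS pT : α → ℝ) (g : ℝ → ℝ) (mstar h m hstar : α → ℝ) (βbar : Fin q → ℝ)
    (hZ : Measurable Z)
    (hx : ∀ i, Measurable fun z => x z i)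
    (hmme : Measurable m) (hmsme : Measurable mstar)
    (hpSme : Measurable pS) (hpTme : Measurable pT)
    (hpT : ∀ z, 0 ≤ pT z)
    (hpos : ∀ z, 0 < pT z → 0 < pS z)
    (hstar_def : ∀ z, hstar z = pT z / pS z)
    (hmapS : Measure.map Z μS = ν.withDensity (fun z => ENNReal.ofReal (pS z)))
    (hmapT : Measure.map Z μT = ν.withDensity (fun z => ENNReal.ofReal (pT z)))
    (htowerS : ∀ ψ : α → ℝ, Integrable (fun ω => ψ (Z ω) * Y ω) μS →
      Integrable (fun ω => ψ (Z ω) * mstar (Z ω)) μS →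
      ∫ ω, ψ (Z ω) * Y ω ∂μS = ∫ ω, ψ (Z ω) * mstar (Z ω) ∂μS)
    (htowerT : ∀ ψ : α → ℝ, Integrable (fun ω => ψ (Z ω) * Y ω) μT →
      Integrable (fun ω => ψ (Z ω) * mstar (Z ω)) μT →
      ∫ ω, ψ (Z ω) * Y ω ∂μT = ∫ ω, ψ (Z ω) * mstar (Z ω) ∂μT)
    (hint2 : ∀ i, Integrable (fun ω => h (Z ω) * x (Z ω) i * Y ω) μS)
    (hint3 : ∀ i, Integrable (fun ω => h (Z ω) * x (Z ω) i * m (Z ω)) μS)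
    (hint4 : ∀ i, Integrable (fun ω => h (Z ω) * x (Z ω) i * mstar (Z ω)) μS)
    (hint5 : ∀ i, Integrable (fun ω => hstar (Z ω) * x (Z ω) i * m (Z ω)) μS)
    (hint6 : ∀ i, Integrable (fun ω => hstar (Z ω) * x (Z ω) i * mstar (Z ω)) μS)
    (hint7 : ∀ i, Integrable (fun ω => x (Z ω) i * Y ω) μT)
    (hint8 : ∀ i, Integrable (fun ω => x (Z ω) i * m (Z ω)) μT)
    (hint9 : ∀ i, Integrable (fun ω => x (Z ω) i * mstar (Z ω)) μT)
    (hint10 : ∀ i, Integrable (fun ω => x (Z ω) i * g (∑ j, x (Z ω) j * βbar j)) μT)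
    -- `β̄` solves the target estimating equation:
    (hbbar : ∀ i, ∫ ω, x (Z ω) i * (Y ω - g (∑ j, x (Z ω) j * βbar j)) ∂μT = 0) :
    ∀ i, ∫ ω, h (Z ω) * x (Z ω) i * (m (Z ω) - Y ω) ∂μS
        - ∫ ω, x (Z ω) i * (m (Z ω) - g (∑ j, x (Z ω) j * βbar j)) ∂μT
      = ∫ ω, (h (Z ω) - hstar (Z ω)) * x (Z ω) i * (m (Z ω) - mstar (Z ω)) ∂μS := by
  intro i
  have source : ∫ ω, h (Z ω) * x (Z ω) i * (m (Z ω) - Y ω) ∂μS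
      = ∫ ω, h (Z ω) * x (Z ω) i * (m (Z ω) - mstar (Z ω)) ∂μS := by
    simp only [mul_sub]
    exact integral_sub_eq_integral_sub_of_integral_eq (hint3 i) (hint2 i) (hint4 i)
      (htowerS (fun z => h z * x z i) (hint2 i) (hint4 i))
  have fitted_eq_response : ∫ ω, x (Z ω) i * g (∑ j, x (Z ω) j * βbar j) ∂μT
      = ∫ ω, x (Z ω) i * Y ω ∂μT := by
    have := hbbar i
    simp only [mul_sub] at this
    rw [integral_sub (hint7 i) (hint10 i), sub_eq_zero] at this
    exact this.symm
  have target : ∫ ω, x (Z ω) i * (m (Z ω) - g (∑ j, x (Z ω) j * βbar j)) ∂μT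
      = ∫ ω, x (Z ω) i * (m (Z ω) - mstar (Z ω)) ∂μT := by
    simp only [mul_sub]
    rw [integral_sub_eq_integral_sub_of_integral_eq (hint8 i) (hint10 i) (hint7 i)
      fitted_eq_response]
    exact integral_sub_eq_integral_sub_of_integral_eq (hint8 i) (hint7 i) (hint9 i)
      (htowerT (fun z => x z i) (hint7 i) (hint9 i))
  have weighting : ∫ ω, x (Z ω) i * (m (Z ω) - mstar (Z ω)) ∂μT
      = ∫ ω, hstar (Z ω) * x (Z ω) i * (m (Z ω) - mstar (Z ω)) ∂μS := by
    simp only [hstar_def, mul_assoc]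
    exact integral_comp_eq_integral_densityRatio_mul hZ hpSme hpTme hpT hpos hmapS hmapT
      ((hx i).mul (hmme.sub hmsme))
  have hint_h : Integrable (fun ω => h (Z ω) * x (Z ω) i * (m (Z ω) - mstar (Z ω))) μS := by
    simp only [mul_sub]
    exact (hint3 i).sub (hint4 i)
  have hint_hstar :
      Integrable (fun ω => hstar (Z ω) * x (Z ω) i * (m (Z ω) - mstar (Z ω))) μS := by
    simp only [mul_sub]
    exact (hint5 i).sub (hint6 i)
  simp only [source, target, weighting, sub_mul]
  exact (integral_sub hint_h hint_hstar).symm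

/-- product-bias decomposition of the doubly robust estimating function at
the true parameter `β̄`: `Ψ(β̄; h, m) = E_S[(h(Z) − h⋆(Z)) X (m(Z) − m⋆(Z))]`. -/
theorem doubly_robust_product_bias {Ω α : Type*} [MeasurableSpace Ω] [MeasurableSpace α]
    (μS μT : Measure Ω) [IsProbabilityMeasure μS] [IsProbabilityMeasure μT]
    (ν : Measure α) (Z : Ω → α) (Y : Ω → ℝ) (q : ℕ) (x : α → Fin q → ℝ)
    (pS pT : α → ℝ) (g : ℝ → ℝ) (mstar h m hstar : α → ℝ) (βbar : Fin q → ℝ)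
    (hZ : Measurable Z) (hY : Measurable Y) (hg : Measurable g)
    (hx : ∀ i, Measurable fun z => x z i)
    (hhme : Measurable h) (hmme : Measurable m) (hmsme : Measurable mstar)
    (hpSme : Measurable pS) (hpTme : Measurable pT)
    (hpS : ∀ z, 0 ≤ pS z) (hpT : ∀ z, 0 ≤ pT z)
    (hpos : ∀ z, 0 < pT z → 0 < pS z)
    (hstar_def : ∀ z, hstar z = pT z / pS z)
    (hmapS : Measure.map Z μS = ν.withDensity (fun z => ENNReal.ofReal (pS z)))
    (hmapT : Measure.map Z μT = ν.withDensity (fun z => ENNReal.ofReal (pT z)))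
    (htowerS : ∀ ψ : α → ℝ, Integrable (fun ω => ψ (Z ω) * Y ω) μS →
      Integrable (fun ω => ψ (Z ω) * mstar (Z ω)) μS →
      ∫ ω, ψ (Z ω) * Y ω ∂μS = ∫ ω, ψ (Z ω) * mstar (Z ω) ∂μS)
    (htowerT : ∀ ψ : α → ℝ, Integrable (fun ω => ψ (Z ω) * Y ω) μT →
      Integrable (fun ω => ψ (Z ω) * mstar (Z ω)) μT →
      ∫ ω, ψ (Z ω) * Y ω ∂μT = ∫ ω, ψ (Z ω) * mstar (Z ω) ∂μT)
    (hint1 : ∀ i, Integrable (fun ω => h (Z ω) * x (Z ω) i * (m (Z ω) - Y ω)) μS)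
    (hint2 : ∀ i, Integrable (fun ω => h (Z ω) * x (Z ω) i * Y ω) μS)
    (hint3 : ∀ i, Integrable (fun ω => h (Z ω) * x (Z ω) i * m (Z ω)) μS)
    (hint4 : ∀ i, Integrable (fun ω => h (Z ω) * x (Z ω) i * mstar (Z ω)) μS)
    (hint5 : ∀ i, Integrable (fun ω => hstar (Z ω) * x (Z ω) i * m (Z ω)) μS)
    (hint6 : ∀ i, Integrable (fun ω => hstar (Z ω) * x (Z ω) i * mstar (Z ω)) μS)
    (hint7 : ∀ i, Integrable (fun ω => x (Z ω) i * Y ω) μT)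
    (hint8 : ∀ i, Integrable (fun ω => x (Z ω) i * m (Z ω)) μT)
    (hint9 : ∀ i, Integrable (fun ω => x (Z ω) i * mstar (Z ω)) μT)
    (hint10 : ∀ i, Integrable (fun ω => x (Z ω) i * g (∑ j, x (Z ω) j * βbar j)) μT)
    -- `β̄` solves the target estimating equation:
    (hbbar : ∀ i, ∫ ω, x (Z ω) i * (Y ω - g (∑ j, x (Z ω) j * βbar j)) ∂μT = 0) :
    ∀ i, ∫ ω, h (Z ω) * x (Z ω) i * (m (Z ω) - Y ω) ∂μS
        - ∫ ω, x (Z ω) i * (m (Z ω) - g (∑ j, x (Z ω) j * βbar j)) ∂μT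
      = ∫ ω, (h (Z ω) - hstar (Z ω)) * x (Z ω) i * (m (Z ω) - mstar (Z ω)) ∂μS :=
  doubly_robust_product_bias_general μS μT ν Z Y q x pS pT g mstar h m hstar βbar hZ hx hmme hmsme
    hpSme hpTme hpT hpos hstar_def hmapS hmapT htowerS htowerT hint2 hint3 hint4 hint5 hint6 hint7
    hint8 hint9 hint10 hbbar
end

section
/- (Exponential-weight aggregation bound) Let Q : ℝ^q → ℝ be Q(β) = ‖β − c‖₂² for a fixed c ∈ ℝ^q, let β₁, β₂ ∈ ℝ^q, a > 0, and define weights w = e^{−aQ(β₁)} / (e^{−aQ(β₁)} + e^{−aQ(β₂)}) and the aggregate β̂ = w β₁ + (1 − w) β₂. Then Q(β̂) ≤ w Q(β₁) + (1−w) Q(β₂) ≤ min(Q(β₁), Q(β₂)) + (log 2)/a. -/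
lemma key_t_le (t : ℝ) (ht : 0 ≤ t) : t ≤ Real.log 2 * (Real.exp t + 1) := by
  have h1 : 1 + t / 2 ≤ Real.exp (t / 2) := by
    have := Real.add_one_le_exp (t / 2); linarith
  have h2 : (1 + t / 2) ^ 2 ≤ Real.exp t := by
    have hnn := Real.exp_nonneg (t / 2)
    have hsq : Real.exp (t / 2) * Real.exp (t / 2) = Real.exp t := by
      rw [← Real.exp_add]; ring_nf
    nlinarith
  have hlog : 0.6931471803 < Real.log 2 := Real.log_two_gt_d9
  nlinarith [sq_nonneg (t - 1), mul_lt_mul_of_pos_right hlog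
    (by positivity : (0:ℝ) < Real.exp t + 1), h2, ht]

/-- exponential-weight aggregation bound: with `Q(β) = ‖β − c‖₂²`,
exponential weight `w = e^{−aQ(β₁)}/(e^{−aQ(β₁)} + e^{−aQ(β₂)})` and aggregate
`β̂ = w β₁ + (1−w) β₂`, one has
`Q(β̂) ≤ w Q(β₁) + (1−w) Q(β₂) ≤ min(Q(β₁), Q(β₂)) + (log 2)/a`. -/
theorem exponential_weight_aggregation (q : ℕ) (c β1 β2 : Fin q → ℝ) (a : ℝ) (ha : 0 < a)
    (Q : (Fin q → ℝ) → ℝ) (hQ : ∀ β, Q β = ∑ i, (β i - c i) ^ 2)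
    (w : ℝ)
    (hw : w = Real.exp (-a * Q β1) / (Real.exp (-a * Q β1) + Real.exp (-a * Q β2)))
    (βhat : Fin q → ℝ) (hβhat : ∀ i, βhat i = w * β1 i + (1 - w) * β2 i) :
    Q βhat ≤ w * Q β1 + (1 - w) * Q β2 ∧
    w * Q β1 + (1 - w) * Q β2 ≤ min (Q β1) (Q β2) + Real.log 2 / a := by
  set E1 := Real.exp (-a * Q β1) with hE1
  set E2 := Real.exp (-a * Q β2) with hE2
  have hE1pos : 0 < E1 := Real.exp_pos _
  have hE2pos : 0 < E2 := Real.exp_pos _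
  have hSpos : 0 < E1 + E2 := by linarith
  have hw0 : 0 ≤ w := by rw [hw]; positivity
  have hw1 : w ≤ 1 := by
    rw [hw, div_le_one hSpos]; linarith
  constructor
  · rw [hQ βhat, hQ β1, hQ β2, Finset.mul_sum, Finset.mul_sum, ← Finset.sum_add_distrib]
    apply Finset.sum_le_sum
    intro i _
    rw [hβhat i]
    nlinarith [sq_nonneg (β1 i - β2 i), mul_nonneg hw0 (sub_nonneg.2 hw1)]
  · rcases le_total (Q β1) (Q β2) with h | h
    · rw [min_eq_left h]
      have hdiff : w * Q β1 + (1 - w) * Q β2 - Q β1 = (E2 * (Q β2 - Q β1)) / (E1 + E2) := by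
        rw [hw]; field_simp; ring
      have hkey := key_t_le (a * (Q β2 - Q β1)) (by nlinarith)
      have hE1eq : E1 = E2 * Real.exp (a * (Q β2 - Q β1)) := by
        rw [hE1, hE2, ← Real.exp_add]; ring_nf
      have : (E2 * (Q β2 - Q β1)) / (E1 + E2) ≤ Real.log 2 / a := by
        rw [div_le_div_iff₀ hSpos ha]
        have h3 := mul_le_mul_of_nonneg_left hkey hE2pos.le
        have h4 : E2 * (Real.log 2 * (Real.exp (a * (Q β2 - Q β1)) + 1))
            = Real.log 2 * (E1 + E2) := by rw [hE1eq]; ring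
        linarith
      linarith [hdiff ▸ this]
    · rw [min_eq_right h]
      have hdiff : w * Q β1 + (1 - w) * Q β2 - Q β2 = (E1 * (Q β1 - Q β2)) / (E1 + E2) := by
        rw [hw]; field_simp; ring
      have hkey := key_t_le (a * (Q β1 - Q β2)) (by nlinarith)
      have hE2eq : E2 = E1 * Real.exp (a * (Q β1 - Q β2)) := by
        rw [hE1, hE2, ← Real.exp_add]; ring_nf
      have : (E1 * (Q β1 - Q β2)) / (E1 + E2) ≤ Real.log 2 / a := by
        rw [div_le_div_iff₀ hSpos ha]
        have h3 := mul_le_mul_of_nonneg_left hkey hE1pos.le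
        have h4 : E1 * (Real.log 2 * (Real.exp (a * (Q β1 - Q β2)) + 1))
            = Real.log 2 * (E1 + E2) := by rw [hE2eq]; ring
        linarith
      linarith [hdiff ▸ this]
end

section
/- (Logistic sigmoid weighting inequality) For real numbers Q₁, Q₂ and a > 0, let w = e^{−aQ₁}/(e^{−aQ₁} + e^{−aQ₂}). Then w Q₁ + (1−w) Q₂ ≤ min(Q₁, Q₂) + (log 2)/a. -/
/-!
Write `u = -a Q₁`, `v = -a Q₂` and `Z = eᵘ + eᵛ`, so that `w = eᵘ / Z` and `1 - w = eᵛ / Z`.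
Then `log w = u - log Z` and `log (1 - w) = v - log Z`, which turns the binary entropy of `w`
into `log Z - (w u + (1 - w) v)`. Since `H(w) ≤ log 2` and `log Z ≥ max u v = -a min(Q₁, Q₂)`,
dividing by `a` gives the claim.
-/

open Real

namespace Real

lemma binEntropy_exp_div_exp_add_exp (u v : ℝ) :
    binEntropy (exp u / (exp u + exp v)) =
      log (exp u + exp v) -
        (exp u / (exp u + exp v) * u + (1 - exp u / (exp u + exp v)) * v) := by
  have hZ : exp u + exp v ≠ 0 := by positivity
  have h_one_sub : 1 - exp u / (exp u + exp v) = exp v / (exp u + exp v) := by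
    field_simp
    ring
  rw [binEntropy, h_one_sub, inv_div, inv_div, log_div hZ (exp_pos u).ne',
    log_div hZ (exp_pos v).ne', log_exp, log_exp]
  field_simp
  ring

lemma max_le_log_exp_add_exp (u v : ℝ) : max u v ≤ log (exp u + exp v) := by
  have hZ : 0 < exp u + exp v := by positivity
  exact max_le ((le_log_iff_exp_le hZ).2 (by linarith [exp_pos v]))
    ((le_log_iff_exp_le hZ).2 (by linarith [exp_pos u]))

lemma max_sub_log_two_le_softmax_mean (u v : ℝ) :
    max u v - log 2 ≤
      exp u / (exp u + exp v) * u + (1 - exp u / (exp u + exp v)) * v := by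
  have h_entropy := binEntropy_exp_div_exp_add_exp u v
  linarith [binEntropy_le_log_two (p := exp u / (exp u + exp v)), max_le_log_exp_add_exp u v]

end Real

/-- logistic sigmoid weighting inequality: for `Q₁, Q₂ ∈ ℝ` and `a > 0`,
with `w = e^{−aQ₁}/(e^{−aQ₁} + e^{−aQ₂})`, one has
`w Q₁ + (1−w) Q₂ ≤ min(Q₁, Q₂) + (log 2)/a`. -/
theorem sigmoid_weighting_inequality (Q1 Q2 a : ℝ) (ha : 0 < a)
    (w : ℝ) (hw : w = Real.exp (-a * Q1) / (Real.exp (-a * Q1) + Real.exp (-a * Q2))) :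
    w * Q1 + (1 - w) * Q2 ≤ min Q1 Q2 + Real.log 2 / a := by
  have h_max : max (-a * Q1) (-a * Q2) = -a * min Q1 Q2 := by
    simp only [neg_mul, max_neg_neg, mul_min_of_nonneg _ _ ha.le]
  have h_mean := max_sub_log_two_le_softmax_mean (-a * Q1) (-a * Q2)
  rw [← hw, h_max] at h_mean
  refine le_of_mul_le_mul_left ?_ ha
  rw [mul_add a (min Q1 Q2), mul_div_cancel₀ _ ha.ne']
  linarith
end

section
/- (Composite expectation identity for the doubly robust loss gradient) Under the covariate shift assumption (same conditional law of Y given Z in source and target) and with correctly specified density ratio h⋆(z) = exp(φ(z)ᵀᾱ), for any measurable m̃ and any β, E_S[h⋆(Z) X (m̃(Z) − Y)] − E_T[X (m̃(Z) − g(Xᵀβ))] = −E_T[X (Y − g(Xᵀβ))]; i.e., the arbitrary imputation function m̃ cancels exactly. -/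
/-!
Covariate shift makes the law of `Z` under the target the law under the source reweighted by
`h⋆`, so `E_S[h⋆(Z) X f(Z)] = E_T[X f(Z)]` for every measurable `f`; and the shared conditional
mean `m⋆` lets `Y` be replaced by `m⋆(Z)` under both populations. Hence the `m̃`-terms of the two
expectations agree, and so do the `Y`-terms after passing through `m⋆`.
-/

open MeasureTheory

section ChangeOfMeasure

variable {Ω α : Type*} [MeasurableSpace Ω] [MeasurableSpace α]

theorem integral_withDensity_ofReal (ν : Measure α) {p : α → ℝ} (hp : Measurable p)
    (hp0 : ∀ z, 0 ≤ p z) (ψ : α → ℝ) :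
    ∫ z, ψ z ∂ν.withDensity (fun z => ENNReal.ofReal (p z)) = ∫ z, p z * ψ z ∂ν := by
  rw [integral_withDensity_eq_integral_toReal_smul hp.ennreal_ofReal
    (Filter.Eventually.of_forall fun _ => ENNReal.ofReal_lt_top)]
  simp only [ENNReal.toReal_ofReal (hp0 _), smul_eq_mul]

theorem withDensity_ofReal_mul_eq_withDensity_withDensity (ν : Measure α) {h p : α → ℝ}
    (hh : Measurable h) (hp : Measurable p) (hh0 : ∀ z, 0 ≤ h z) :
    ν.withDensity (fun z => ENNReal.ofReal (h z * p z))
      = (ν.withDensity fun z => ENNReal.ofReal (p z)).withDensity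
          fun z => ENNReal.ofReal (h z) := by
  rw [← withDensity_mul ν hp.ennreal_ofReal hh.ennreal_ofReal]
  congr 1
  ext z
  simp only [Pi.mul_apply, ENNReal.ofReal_mul (hh0 z), mul_comm]

theorem integral_comp_eq_integral_mul_comp {μS μT : Measure Ω} {Z : Ω → α} {h f : α → ℝ}
    (hZ : Measurable Z) (hh : Measurable h) (hh0 : ∀ z, 0 ≤ h z) (hf : Measurable f)
    (hlaw : μT.map Z = (μS.map Z).withDensity fun z => ENNReal.ofReal (h z)) :
    ∫ ω, f (Z ω) ∂μT = ∫ ω, h (Z ω) * f (Z ω) ∂μS := by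
  rw [← integral_map hZ.aemeasurable hf.aestronglyMeasurable, hlaw,
    integral_withDensity_ofReal _ hh hh0]
  exact integral_map (f := fun z => h z * f z) hZ.aemeasurable
    (hh.mul hf).aestronglyMeasurable

end ChangeOfMeasure

theorem imputation_function_cancels_general {Ω α : Type*} [MeasurableSpace Ω] [MeasurableSpace α]
    (μS μT : Measure Ω)
    (ν : Measure α) (Z : Ω → α) (Y : Ω → ℝ) (q d : ℕ) (x : α → Fin q → ℝ)
    (φ : α → Fin d → ℝ) (αbar : Fin d → ℝ) (pS pT : α → ℝ) (g : ℝ → ℝ)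
    (mstar mtil hstar : α → ℝ) (β : Fin q → ℝ)
    (hZ : Measurable Z)
    (hx : ∀ i, Measurable fun z => x z i) (hφ : ∀ i, Measurable fun z => φ z i)
    (hmt : Measurable mtil)
    (hms : Measurable mstar)
    (hpSme : Measurable pS)
    -- correct specification of the density ratio:
    (hstar_def : ∀ z, hstar z = Real.exp (∑ i, φ z i * αbar i))
    (hratio : ∀ z, pT z = hstar z * pS z)
    (hmapS : Measure.map Z μS = ν.withDensity (fun z => ENNReal.ofReal (pS z)))
    (hmapT : Measure.map Z μT = ν.withDensity (fun z => ENNReal.ofReal (pT z)))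
    -- covariate shift: same conditional law of `Y` given `Z` (tower under both):
    (htowerS : ∀ ψ : α → ℝ, Integrable (fun ω => ψ (Z ω) * Y ω) μS →
      Integrable (fun ω => ψ (Z ω) * mstar (Z ω)) μS →
      ∫ ω, ψ (Z ω) * Y ω ∂μS = ∫ ω, ψ (Z ω) * mstar (Z ω) ∂μS)
    (htowerT : ∀ ψ : α → ℝ, Integrable (fun ω => ψ (Z ω) * Y ω) μT →
      Integrable (fun ω => ψ (Z ω) * mstar (Z ω)) μT →
      ∫ ω, ψ (Z ω) * Y ω ∂μT = ∫ ω, ψ (Z ω) * mstar (Z ω) ∂μT)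
    (hint2 : ∀ i, Integrable (fun ω => hstar (Z ω) * x (Z ω) i * Y ω) μS)
    (hint3 : ∀ i, Integrable (fun ω => hstar (Z ω) * x (Z ω) i * mtil (Z ω)) μS)
    (hint4 : ∀ i, Integrable (fun ω => hstar (Z ω) * x (Z ω) i * mstar (Z ω)) μS)
    (hint5 : ∀ i, Integrable (fun ω => x (Z ω) i * Y ω) μT)
    (hint6 : ∀ i, Integrable (fun ω => x (Z ω) i * mtil (Z ω)) μT)
    (hint7 : ∀ i, Integrable (fun ω => x (Z ω) i * mstar (Z ω)) μT)
    (hint8 : ∀ i, Integrable (fun ω => x (Z ω) i * g (∑ j, x (Z ω) j * β j)) μT) :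
    ∀ i, ∫ ω, hstar (Z ω) * x (Z ω) i * (mtil (Z ω) - Y ω) ∂μS
        - ∫ ω, x (Z ω) i * (mtil (Z ω) - g (∑ j, x (Z ω) j * β j)) ∂μT
      = -∫ ω, x (Z ω) i * (Y ω - g (∑ j, x (Z ω) j * β j)) ∂μT := by
  intro i
  have hh : Measurable hstar := by
    rw [funext hstar_def]
    exact (Finset.measurable_sum _ fun j _ => (hφ j).mul_const _).exp
  have hh0 : ∀ z, 0 ≤ hstar z := fun z => hstar_def z ▸ (Real.exp_pos _).le
  have hlaw : μT.map Z = (μS.map Z).withDensity fun z => ENNReal.ofReal (hstar z) := by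
    rw [hmapT, hmapS, funext hratio,
      withDensity_ofReal_mul_eq_withDensity_withDensity ν hh hpSme hh0]
  have transfer : ∀ f : α → ℝ, Measurable f →
      ∫ ω, hstar (Z ω) * x (Z ω) i * f (Z ω) ∂μS = ∫ ω, x (Z ω) i * f (Z ω) ∂μT := by
    intro f hf
    simp only [mul_assoc]
    exact (integral_comp_eq_integral_mul_comp hZ hh hh0 ((hx i).mul hf) hlaw).symm
  have towerS := htowerS (fun z => hstar z * x z i) (hint2 i) (hint4 i)
  have towerT := htowerT (fun z => x z i) (hint5 i) (hint7 i)
  simp only [mul_sub]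
  rw [integral_sub (hint3 i) (hint2 i), integral_sub (hint6 i) (hint8 i),
    integral_sub (hint5 i) (hint8 i), towerS, transfer mtil hmt, transfer mstar hms, towerT]
  ring

/-- exact cancellation of the imputation function under a correct density
ratio: under covariate shift and with `h⋆(z) = exp(φ(z)ᵀᾱ) = p_T(z)/p_S(z)`, for any
measurable `m̃` and any `β`,
`E_S[h⋆(Z) X (m̃(Z) − Y)] − E_T[X (m̃(Z) − g(Xᵀβ))] = −E_T[X (Y − g(Xᵀβ))]`. -/
theorem imputation_function_cancels {Ω α : Type*} [MeasurableSpace Ω] [MeasurableSpace α]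
    (μS μT : Measure Ω) [IsProbabilityMeasure μS] [IsProbabilityMeasure μT]
    (ν : Measure α) (Z : Ω → α) (Y : Ω → ℝ) (q d : ℕ) (x : α → Fin q → ℝ)
    (φ : α → Fin d → ℝ) (αbar : Fin d → ℝ) (pS pT : α → ℝ) (g : ℝ → ℝ)
    (mstar mtil hstar : α → ℝ) (β : Fin q → ℝ)
    (hZ : Measurable Z) (hY : Measurable Y) (hg : Measurable g)
    (hx : ∀ i, Measurable fun z => x z i) (hφ : ∀ i, Measurable fun z => φ z i)
    (hmt : Measurable mtil) (hmtbd : ∃ C : ℝ, ∀ z, |mtil z| ≤ C)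
    (hms : Measurable mstar)
    (hpSme : Measurable pS) (hpTme : Measurable pT)
    (hpS : ∀ z, 0 ≤ pS z) (hpT : ∀ z, 0 ≤ pT z)
    -- correct specification of the density ratio:
    (hstar_def : ∀ z, hstar z = Real.exp (∑ i, φ z i * αbar i))
    (hratio : ∀ z, pT z = hstar z * pS z)
    (hmapS : Measure.map Z μS = ν.withDensity (fun z => ENNReal.ofReal (pS z)))
    (hmapT : Measure.map Z μT = ν.withDensity (fun z => ENNReal.ofReal (pT z)))
    -- covariate shift: same conditional law of `Y` given `Z` (tower under both):
    (htowerS : ∀ ψ : α → ℝ, Integrable (fun ω => ψ (Z ω) * Y ω) μS →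
      Integrable (fun ω => ψ (Z ω) * mstar (Z ω)) μS →
      ∫ ω, ψ (Z ω) * Y ω ∂μS = ∫ ω, ψ (Z ω) * mstar (Z ω) ∂μS)
    (htowerT : ∀ ψ : α → ℝ, Integrable (fun ω => ψ (Z ω) * Y ω) μT →
      Integrable (fun ω => ψ (Z ω) * mstar (Z ω)) μT →
      ∫ ω, ψ (Z ω) * Y ω ∂μT = ∫ ω, ψ (Z ω) * mstar (Z ω) ∂μT)
    (hint1 : ∀ i, Integrable (fun ω => hstar (Z ω) * x (Z ω) i * (mtil (Z ω) - Y ω)) μS)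
    (hint2 : ∀ i, Integrable (fun ω => hstar (Z ω) * x (Z ω) i * Y ω) μS)
    (hint3 : ∀ i, Integrable (fun ω => hstar (Z ω) * x (Z ω) i * mtil (Z ω)) μS)
    (hint4 : ∀ i, Integrable (fun ω => hstar (Z ω) * x (Z ω) i * mstar (Z ω)) μS)
    (hint5 : ∀ i, Integrable (fun ω => x (Z ω) i * Y ω) μT)
    (hint6 : ∀ i, Integrable (fun ω => x (Z ω) i * mtil (Z ω)) μT)
    (hint7 : ∀ i, Integrable (fun ω => x (Z ω) i * mstar (Z ω)) μT)
    (hint8 : ∀ i, Integrable (fun ω => x (Z ω) i * g (∑ j, x (Z ω) j * β j)) μT) :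
    ∀ i, ∫ ω, hstar (Z ω) * x (Z ω) i * (mtil (Z ω) - Y ω) ∂μS
        - ∫ ω, x (Z ω) i * (mtil (Z ω) - g (∑ j, x (Z ω) j * β j)) ∂μT
      = -∫ ω, x (Z ω) i * (Y ω - g (∑ j, x (Z ω) j * β j)) ∂μT :=
  imputation_function_cancels_general μS μT ν Z Y q d x φ αbar pS pT g mstar mtil hstar β hZ hx hφ
    hmt hms hpSme hstar_def hratio hmapS hmapT htowerS htowerT hint2 hint3 hint4 hint5 hint6 hint7
    hint8
end
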